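/- Suppose κ satisfies Assumption 1. Let (f^(i), x̂^(i)) satisfy f^(i) ∈ 𝔓(x̂^(i−1)) and x̂^(i) ∈ 𝔛(f^(i)) for every i. Suppose that along an infinite subset {i_l} of ℕ: the policies f^(i_l) converge to a non-degenerate policy f_{k:N}, the estimates x̂^(i_l) converge componentwise in d to x̂_{k:N}, and x̂^(i_l−1) converge componentwise in d to some x̂'_{k:N}. Then x̂_{k:N} ∈ 𝔛(f_{k:N}). -/

import Mathlib

open MeasureTheory Filter
open scoped ENNReal NNReal Topology

noncomputable section

/-- The state space `S = ℝ² × [0, 2π)`. -/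
abbrev S : Type := {x : ℝ × ℝ × ℝ // x.2.2 ∈ Set.Ico (0 : ℝ) (2 * Real.pi)}

/-- The metric `d` on `S`. -/
noncomputable def dS (x y : S) : ℝ :=
  Real.sqrt ((x.1.1 - y.1.1) ^ 2 + (x.1.2.1 - y.1.2.1) ^ 2
    + 2 * (Real.cos x.1.2.2 - Real.cos y.1.2.2) ^ 2
    + 2 * (Real.sin x.1.2.2 - Real.sin y.1.2.2) ^ 2)

/-- The initial state `x₀ = (0,0,0)`. -/
def origin : S := ⟨(0, 0, 0), ⟨le_rfl, by positivity⟩⟩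

/-- `κ` is a Markov kernel on `S`. -/
def IsMarkov (κ : S → Measure S) : Prop :=
  (∀ x, IsProbabilityMeasure (κ x)) ∧
    ∀ A : Set S, MeasurableSet A → Measurable fun x => κ x A

/-- Continuity of a real-valued function with respect to the metric `dS`. -/
def DContinuous (g : S → ℝ) : Prop :=
  ∀ x : S, ∀ ε : ℝ, 0 < ε → ∃ δ : ℝ, 0 < δ ∧ ∀ y : S, dS x y < δ → |g y - g x| < ε

/-- Openness with respect to the metric `dS`. -/
def DOpen (O : Set S) : Prop :=
  ∀ x ∈ O, ∃ δ : ℝ, 0 < δ ∧ ∀ y : S, dS x y < δ → y ∈ O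

/-- Assumption 1 on the kernel `κ`. -/
def Assumption1 (κ : S → Measure S) : Prop :=
  (∀ A : Set S, MeasurableSet A → DContinuous fun x => (κ x A).toReal) ∧
    ∀ O : Set S, DOpen O → O.Nonempty → ∀ x : S, 0 < κ x O

/-- Auxiliary downward value recursion; the first argument is the number
`N + 1 - j` of remaining stages. -/
noncomputable def Jaux (κ : S → Measure S) (c' : ℕ → ℝ) (xhat : ℕ → S) :
    ℕ → ℕ → S → ℝ≥0∞
  | 0, _, _ => 0
  | m + 1, j, x =>
      min (ENNReal.ofReal (dS x (xhat j) ^ 2) + ∫⁻ y, Jaux κ c' xhat m (j + 1) y ∂(κ x))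
        (ENNReal.ofReal (c' j))

/-- The optimal cost-to-go `J*_j(x, x̂_{j:N})`. -/
noncomputable def JJ (κ : S → Measure S) (c' : ℕ → ℝ) (N : ℕ) (xhat : ℕ → S)
    (j : ℕ) (x : S) : ℝ≥0∞ :=
  Jaux κ c' xhat (N + 1 - j) j x

/-- `G_j(x, x̂_{j:N}) = ∫ J*_j(y, x̂_{j:N}) κ(x)(dy)`. -/
noncomputable def Gj (κ : S → Measure S) (c' : ℕ → ℝ) (N : ℕ) (xhat : ℕ → S)
    (j : ℕ) (x : S) : ℝ≥0∞ :=
  ∫⁻ y, JJ κ c' N xhat j y ∂(κ x)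

/-- `G(x̂_{k:N}) = G_k(x₀, x̂_{k:N})`. -/
noncomputable def Gtot (κ : S → Measure S) (c' : ℕ → ℝ) (k N : ℕ) (xhat : ℕ → S) : ℝ≥0∞ :=
  Gj κ c' N xhat k origin

/-- A randomized policy: a tuple of Borel measurable functions `f_j : S → [0,1]`. -/
def IsPolicy (k N : ℕ) (f : ℕ → S → ℝ≥0∞) : Prop :=
  ∀ j, k ≤ j → j ≤ N → Measurable (f j) ∧ ∀ x, f j x ≤ 1

/-- Auxiliary cost-to-go recursion for a policy; first argument is `N + 1 - j`. -/
noncomputable def Vaux (κ : S → Measure S) (c' : ℕ → ℝ) (xhat : ℕ → S)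
    (f : ℕ → S → ℝ≥0∞) : ℕ → ℕ → S → ℝ≥0∞
  | 0, _, _ => 0
  | m + 1, j, x =>
      f j x * (ENNReal.ofReal (dS x (xhat j) ^ 2) + ∫⁻ y, Vaux κ c' xhat f m (j + 1) y ∂(κ x))
        + (1 - f j x) * ENNReal.ofReal (c' j)

/-- The cost-to-go `V_j` of a policy `f` with estimates `x̂`. -/
noncomputable def VV (κ : S → Measure S) (c' : ℕ → ℝ) (N : ℕ) (xhat : ℕ → S)
    (f : ℕ → S → ℝ≥0∞) (j : ℕ) (x : S) : ℝ≥0∞ :=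
  Vaux κ c' xhat f (N + 1 - j) j x

/-- The total expected cost `C(f_{k:N}, x̂_{k:N})`. -/
noncomputable def Cost (κ : S → Measure S) (c' : ℕ → ℝ) (k N : ℕ) (xhat : ℕ → S)
    (f : ℕ → S → ℝ≥0∞) : ℝ≥0∞ :=
  ∫⁻ y, VV κ c' N xhat f k y ∂(κ origin)

/-- `f ∈ 𝔓(x̂_{k:N})`: `f` minimizes the cost over all randomized policies. -/
def inP (κ : S → Measure S) (c' : ℕ → ℝ) (k N : ℕ) (xhat : ℕ → S)
    (f : ℕ → S → ℝ≥0∞) : Prop :=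
  IsPolicy k N f ∧
    ∀ g : ℕ → S → ℝ≥0∞, IsPolicy k N g → Cost κ c' k N xhat f ≤ Cost κ c' k N xhat g

/-- `x̂ ∈ 𝔛(f_{k:N})`: the estimates minimize the cost for the policy `f`. -/
def inX (κ : S → Measure S) (c' : ℕ → ℝ) (k N : ℕ) (f : ℕ → S → ℝ≥0∞)
    (xhat : ℕ → S) : Prop :=
  ∀ yhat : ℕ → S, Cost κ c' k N xhat f ≤ Cost κ c' k N yhat f

/-- Conditioning a measure on "no transmission" at stage `j`. -/
noncomputable def condMeas (f : ℕ → S → ℝ≥0∞) (j : ℕ) (μ : Measure S) : Measure S :=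
  (∫⁻ x, f j x ∂μ)⁻¹ • μ.withDensity (f j)

/-- The predicted measures `μ_{j|j−1}`, by recursion on `j - k`. -/
noncomputable def mupredAux (κ : S → Measure S) (f : ℕ → S → ℝ≥0∞) (k : ℕ) :
    ℕ → Measure S
  | 0 => κ origin
  | n + 1 => (condMeas f (k + n) (mupredAux κ f k n)).bind κ

/-- `μ_{j|j−1}`. -/
noncomputable def mupred (κ : S → Measure S) (f : ℕ → S → ℝ≥0∞) (k j : ℕ) : Measure S :=
  mupredAux κ f k (j - k)

/-- `q_j = ∫ f_j dμ_{j|j−1}`. -/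
noncomputable def qq (κ : S → Measure S) (f : ℕ → S → ℝ≥0∞) (k j : ℕ) : ℝ≥0∞ :=
  ∫⁻ x, f j x ∂(mupred κ f k j)

/-- `μ_{j|j}`. -/
noncomputable def mucond (κ : S → Measure S) (f : ℕ → S → ℝ≥0∞) (k j : ℕ) : Measure S :=
  condMeas f j (mupred κ f k j)

/-- Non-degeneracy of a policy. -/
def NonDeg (κ : S → Measure S) (f : ℕ → S → ℝ≥0∞) (k N : ℕ) : Prop :=
  ∀ j, k ≤ j → j ≤ N → 0 < qq κ f k j

/-- The closed "no transmission" region `D̄_j`. -/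
noncomputable def Dbar (κ : S → Measure S) (c' : ℕ → ℝ) (N : ℕ) (xhat : ℕ → S)
    (j : ℕ) : Set S :=
  {x : S | ENNReal.ofReal (dS x (xhat j) ^ 2) + ∫⁻ y, JJ κ c' N xhat (j + 1) y ∂(κ x)
      ≤ ENNReal.ofReal (c' j)}

/-- The open "no transmission" region `Ḏ_j`. -/
noncomputable def Dund (κ : S → Measure S) (c' : ℕ → ℝ) (N : ℕ) (xhat : ℕ → S)
    (j : ℕ) : Set S :=
  {x : S | ENNReal.ofReal (dS x (xhat j) ^ 2) + ∫⁻ y, JJ κ c' N xhat (j + 1) y ∂(κ x)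
      < ENNReal.ofReal (c' j)}

/-- Hypothesis (H). -/
def HypH (κ : S → Measure S) (c' : ℕ → ℝ) (k N : ℕ) : Prop :=
  ∀ j, k ≤ j → j ≤ N → ∃ xhat : ℕ → S, (Dund κ c' N xhat j).Nonempty

/-- Weak convergence of measures on `(S, dS)`: tested against `dS`-continuous
bounded functions. -/
def WeakConvS (μl : ℕ → Measure S) (μ : Measure S) : Prop :=
  ∀ h : S → ℝ, DContinuous h → (∃ C : ℝ, ∀ x, |h x| ≤ C) →
    Tendsto (fun l => ∫ x, h x ∂(μl l)) atTop (𝓝 (∫ x, h x ∂μ))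

/-- Convergence of a sequence of (non-degenerate) policies to a policy. -/
def PolConv (κ : S → Measure S) (k N : ℕ) (g : ℕ → ℕ → S → ℝ≥0∞)
    (f : ℕ → S → ℝ≥0∞) : Prop :=
  ∀ j, k ≤ j → j ≤ N →
    WeakConvS (fun l => mucond κ (g l) k j) (mucond κ f k j) ∧
      Tendsto (fun l => qq κ (g l) k j) atTop (𝓝 (qq κ f k j))


/-!
The estimates enter the cost only through the stage terms `∫ f_j(x) d(x, x̂_j)²` against the
unnormalized predicted laws; after normalization the stage-`j` term is
`(q_k ⋯ q_j) · ∫ d(x, x̂_j)² μ_{j|j}(dx)`. Hence `x̂ ∈ 𝔛(f)` as soon as every `x̂_j` minimizes the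
second moment of `μ_{j|j}`, and conversely each `x̂^(i)_j` minimizes the second moment of the
corresponding `μ^(i)_{j|j}`. Since always transmitting costs `c'_k`, the optimal costs are bounded
by `c'_k`; as the weights `q_k ⋯ q_j` of `f^(i_l)` converge to the positive weights of `f`, the
second moments of the `μ^(i_l)_{j|j}` are uniformly bounded. Weak convergence together with this
bound lets integrals of continuous functions of linear growth pass to the limit (truncating at
level `R` costs `O(1/R)`), and `d(·, z)² − d(·, x̂_j)²` has linear growth, so the minimizing
property of `x̂^(i_l)_j` survives in the limit.
-/


def toR4 (x : S) : EuclideanSpace ℝ (Fin 4) :=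
  !₂[x.1.1, x.1.2.1, Real.sqrt 2 * Real.cos x.1.2.2, Real.sqrt 2 * Real.sin x.1.2.2]

lemma dS_eq_dist (x y : S) : dS x y = dist (toR4 x) (toR4 y) := by
  have h2 : Real.sqrt 2 ^ 2 = 2 := Real.sq_sqrt zero_le_two
  rw [EuclideanSpace.dist_eq, Fin.sum_univ_four, dS]
  congr 1
  simp only [toR4, Real.dist_eq, sq_abs, PiLp.toLp_apply]
  simp only [Matrix.cons_val_zero, Matrix.cons_val_one, Matrix.cons_val_two, Matrix.cons_val_three,
    Matrix.vecHead, Matrix.vecTail, Function.comp_apply, Fin.succ_zero_eq_one, Fin.succ_one_eq_two]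
  linear_combination
    (-(Real.cos x.1.2.2 - Real.cos y.1.2.2) ^ 2 - (Real.sin x.1.2.2 - Real.sin y.1.2.2) ^ 2) * h2

lemma dS_nonneg (x y : S) : 0 ≤ dS x y := Real.sqrt_nonneg _

lemma dS_self (x : S) : dS x x = 0 := by simp [dS_eq_dist]

lemma dS_comm (x y : S) : dS x y = dS y x := by simp only [dS_eq_dist, dist_comm]

lemma dS_triangle (x y z : S) : dS x z ≤ dS x y + dS y z := by
  simp only [dS_eq_dist]; exact dist_triangle _ _ _

lemma continuous_dS_left (z : S) : Continuous fun x => dS x z := by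
  unfold dS; fun_prop

lemma continuous_dS_right (x : S) : Continuous fun y => dS x y := by
  unfold dS; fun_prop

lemma abs_dS_sub_dS_le (x y z : S) : |dS x z - dS y z| ≤ dS x y := by
  rw [abs_sub_le_iff]
  constructor
  · linarith [dS_triangle x y z]
  · linarith [dS_triangle y x z, dS_comm x y]

lemma abs_dS_sq_sub_dS_sq_le (x a w : S) :
    |dS x w ^ 2 - dS x a ^ 2| ≤ dS a w * (2 * dS x a + dS a w) := by
  have h := abs_dS_sub_dS_le w a x
  rw [dS_comm w x, dS_comm a x, dS_comm w a] at h
  rw [sq_sub_sq, abs_mul, mul_comm]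
  have : |dS x w + dS x a| ≤ 2 * dS x a + dS a w := by
    rw [abs_of_nonneg (add_nonneg (dS_nonneg _ _) (dS_nonneg _ _))]
    linarith [(abs_le.mp h).2]
  exact mul_le_mul h this (abs_nonneg _) (dS_nonneg _ _)

lemma dContinuous_iff_tendsto {g : S → ℝ} :
    DContinuous g ↔ ∀ x, Tendsto g (comap (dS x) (𝓝 0)) (𝓝 (g x)) := by
  refine forall_congr' fun x => ?_
  rw [(Metric.nhds_basis_ball.comap (dS x)).tendsto_iff Metric.nhds_basis_ball]
  simp only [Set.mem_preimage, Metric.mem_ball, Real.dist_eq, sub_zero,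
    abs_of_nonneg (dS_nonneg _ _)]

lemma DContinuous.comp₂ {g h : S → ℝ} {φ : ℝ → ℝ → ℝ} (hφ : Continuous (Function.uncurry φ))
    (hg : DContinuous g) (hh : DContinuous h) : DContinuous fun x => φ (g x) (h x) := by
  rw [dContinuous_iff_tendsto] at *
  exact fun x => (hφ.tendsto (g x, h x)).comp ((hg x).prodMk_nhds (hh x))

lemma DContinuous.comp {g : S → ℝ} {φ : ℝ → ℝ} (hφ : Continuous φ) (hg : DContinuous g) :
    DContinuous fun x => φ (g x) :=
  DContinuous.comp₂ (φ := fun s _ => φ s) (by fun_prop) hg hg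

lemma dContinuous_dS (z : S) : DContinuous fun x => dS x z :=
  fun x ε hε => ⟨ε, hε, fun y hy => (abs_dS_sub_dS_le y x z).trans_lt (by rwa [dS_comm])⟩

lemma DContinuous.continuous {g : S → ℝ} (hg : DContinuous g) : Continuous g := by
  rw [dContinuous_iff_tendsto] at hg
  refine continuous_iff_continuousAt.2 fun x => (hg x).mono_left ?_
  rw [← tendsto_iff_comap]
  simpa [dS_self] using (continuous_dS_right x).tendsto x

lemma DContinuous.measurable {g : S → ℝ} (hg : DContinuous g) : Measurable g :=
  hg.continuous.measurable

def secondMoment (ν : Measure S) (z : S) : ℝ≥0∞ := ∫⁻ x, ENNReal.ofReal (dS x z ^ 2) ∂ν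

lemma measurable_dS_sq (z : S) : Measurable fun x => dS x z ^ 2 :=
  ((continuous_dS_left z).pow 2).measurable

section SecondMoment

variable {ν : Measure S}

lemma integrable_dS_sq {z : S} (hz : secondMoment ν z ≠ ∞) :
    Integrable (fun x => dS x z ^ 2) ν :=
  ⟨(measurable_dS_sq z).aestronglyMeasurable,
    (hasFiniteIntegral_iff_ofReal (ae_of_all _ fun _ => sq_nonneg _)).2 hz.lt_top⟩

lemma secondMoment_eq_ofReal_integral {z : S} (hz : secondMoment ν z ≠ ∞) :
    secondMoment ν z = ENNReal.ofReal (∫ x, dS x z ^ 2 ∂ν) :=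
  (ofReal_integral_eq_lintegral_ofReal (integrable_dS_sq hz)
    (ae_of_all _ fun _ => sq_nonneg _)).symm

lemma integral_dS_sq_le {z : S} {B : ℝ} (hB : 0 ≤ B) (hz : secondMoment ν z ≤ ENNReal.ofReal B) :
    ∫ x, dS x z ^ 2 ∂ν ≤ B := by
  rw [integral_eq_lintegral_of_nonneg_ae (ae_of_all _ fun _ => sq_nonneg _)
    (measurable_dS_sq z).aestronglyMeasurable]
  exact ENNReal.toReal_le_of_le_ofReal hB hz

variable [IsProbabilityMeasure ν]

lemma secondMoment_le_two_mul_add (a z : S) :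
    secondMoment ν z ≤ 2 * secondMoment ν a + ENNReal.ofReal (2 * dS a z ^ 2) := by
  have hpt (x : S) : ENNReal.ofReal (dS x z ^ 2)
      ≤ 2 * ENNReal.ofReal (dS x a ^ 2) + ENNReal.ofReal (2 * dS a z ^ 2) := by
    rw [← ENNReal.ofReal_ofNat 2, ← ENNReal.ofReal_mul zero_le_two,
      ← ENNReal.ofReal_add (by positivity) (by positivity)]
    refine ENNReal.ofReal_le_ofReal ?_
    nlinarith [dS_triangle x a z, dS_nonneg x z, sq_nonneg (dS x a - dS a z)]
  calc secondMoment ν z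
      ≤ ∫⁻ x, 2 * ENNReal.ofReal (dS x a ^ 2) + ENNReal.ofReal (2 * dS a z ^ 2) ∂ν :=
        lintegral_mono hpt
    _ = 2 * secondMoment ν a + ENNReal.ofReal (2 * dS a z ^ 2) := by
        rw [lintegral_add_right _ measurable_const, lintegral_const,
          lintegral_const_mul _ (measurable_dS_sq a).ennreal_ofReal, measure_univ, mul_one,
          secondMoment]

lemma secondMoment_ne_top {a : S} (ha : secondMoment ν a ≠ ∞) (z : S) :
    secondMoment ν z ≠ ∞ :=
  ne_top_of_le_ne_top (by finiteness) (secondMoment_le_two_mul_add a z)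

lemma secondMoment_le_secondMoment_iff {a w : S} (ha : secondMoment ν a ≠ ∞) (z : S) :
    secondMoment ν w ≤ secondMoment ν z ↔ ∫ x, dS x w ^ 2 ∂ν ≤ ∫ x, dS x z ^ 2 ∂ν := by
  rw [secondMoment_eq_ofReal_integral (secondMoment_ne_top ha w),
    secondMoment_eq_ofReal_integral (secondMoment_ne_top ha z),
    ENNReal.ofReal_le_ofReal_iff (integral_nonneg fun _ => sq_nonneg _)]

lemma abs_integral_dS_sq_sub_le {a : S} (ha : secondMoment ν a ≠ ∞) (w : S) :
    |∫ x, dS x w ^ 2 ∂ν - ∫ x, dS x a ^ 2 ∂ν|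
      ≤ dS a w * (1 + dS a w + ∫ x, dS x a ^ 2 ∂ν) := by
  have hint := integrable_dS_sq ha
  have hpt (x : S) : |dS x w ^ 2 - dS x a ^ 2| ≤ dS a w * (1 + dS a w + dS x a ^ 2) := by
    refine (abs_dS_sq_sub_dS_sq_le x a w).trans (mul_le_mul_of_nonneg_left ?_ (dS_nonneg a w))
    nlinarith [sq_nonneg (dS x a - 1)]
  rw [← integral_sub (integrable_dS_sq (secondMoment_ne_top ha w)) hint]
  calc |∫ x, dS x w ^ 2 - dS x a ^ 2 ∂ν|
      ≤ ∫ x, dS a w * (1 + dS a w + dS x a ^ 2) ∂ν :=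
        (abs_integral_le_integral_abs).trans
          (integral_mono (((integrable_dS_sq (secondMoment_ne_top ha w)).sub hint).abs)
            (((integrable_const _).add hint).const_mul _) hpt)
    _ = dS a w * (1 + dS a w + ∫ x, dS x a ^ 2 ∂ν) := by
        rw [integral_const_mul, integral_add (integrable_const _) hint, integral_const,
          probReal_univ, one_smul]

end SecondMoment

lemma abs_sub_clamp_le {R : ℝ} (hR : 0 < R) (t : ℝ) : |t - max (-R) (min R t)| ≤ t ^ 2 / R := by
  rw [le_div_iff₀ hR]
  rcases lt_or_ge R t with h | h
  · rw [min_eq_left h.le, max_eq_right (by linarith), abs_of_pos (by linarith)]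
    nlinarith
  rcases lt_or_ge t (-R) with h' | h'
  · rw [min_eq_right h, max_eq_left h'.le, abs_of_neg (by linarith)]
    nlinarith
  · rw [min_eq_right h, max_eq_right h', sub_self, abs_zero, zero_mul]
    positivity

section Truncation

variable {ν : Measure S} [IsProbabilityMeasure ν] {g : S → ℝ} {a : S} {K : ℝ}

lemma integrable_of_sq_le (hg : Measurable g) (hga : ∀ x, g x ^ 2 ≤ K * (1 + dS x a ^ 2))
    (ha : secondMoment ν a ≠ ∞) : Integrable g ν := by
  refine Integrable.mono' (g := fun x => 1 + K * (1 + dS x a ^ 2))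
    ((integrable_const 1).add (((integrable_const 1).add (integrable_dS_sq ha)).const_mul K))
    hg.aestronglyMeasurable (ae_of_all _ fun x => ?_)
  rw [Real.norm_eq_abs]
  nlinarith [hga x, sq_abs (g x), sq_nonneg (|g x| - 1)]

lemma abs_integral_sub_integral_clamp_le (hg : Measurable g)
    (hga : ∀ x, g x ^ 2 ≤ K * (1 + dS x a ^ 2)) (ha : secondMoment ν a ≠ ∞) {R : ℝ}
    (hR : 0 < R) :
    |∫ x, g x ∂ν - ∫ x, max (-R) (min R (g x)) ∂ν| ≤ K * (1 + ∫ x, dS x a ^ 2 ∂ν) / R := by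
  have hgi := integrable_of_sq_le hg hga ha
  have hci : Integrable (fun x => max (-R) (min R (g x))) ν :=
    Integrable.of_bound (by fun_prop) R (ae_of_all _ fun x =>
      abs_le.2 ⟨le_max_left _ _, max_le (by linarith) (min_le_left _ _)⟩)
  have hdi := integrable_dS_sq ha
  rw [← integral_sub hgi hci]
  calc |∫ x, g x - max (-R) (min R (g x)) ∂ν|
      ≤ ∫ x, K * (1 + dS x a ^ 2) / R ∂ν :=
        abs_integral_le_integral_abs.trans <| integral_mono (hgi.sub hci).abs
          ((((integrable_const 1).add hdi).const_mul K).div_const R)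
          fun x => (abs_sub_clamp_le hR _).trans (div_le_div_of_nonneg_right (hga x) hR.le)
    _ = K * (1 + ∫ x, dS x a ^ 2 ∂ν) / R := by
        rw [integral_div, integral_const_mul, integral_add (integrable_const _) hdi,
          integral_const, probReal_univ, one_smul]

end Truncation

lemma tendsto_integral_of_sq_le {ν : ℕ → Measure S} {μ : Measure S} [IsProbabilityMeasure μ]
    (hν : ∀ᶠ l in atTop, IsProbabilityMeasure (ν l)) (hconv : WeakConvS ν μ) {a : S} {B : ℝ}
    (hB : 0 ≤ B) (hνB : ∀ᶠ l in atTop, secondMoment (ν l) a ≤ ENNReal.ofReal B)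
    (hμB : secondMoment μ a ≤ ENNReal.ofReal B) {g : S → ℝ} (hg : DContinuous g) {K : ℝ}
    (hga : ∀ x, g x ^ 2 ≤ K * (1 + dS x a ^ 2)) :
    Tendsto (fun l => ∫ x, g x ∂ν l) atTop (𝓝 (∫ x, g x ∂μ)) := by
  have hK : 0 ≤ K := by nlinarith [hga origin, sq_nonneg (g origin), sq_nonneg (dS origin a)]
  rw [Metric.tendsto_nhds]
  intro ε hε
  set M := K * (1 + B)
  set R := 3 * M / ε + 1
  have hR : 0 < R := by positivity
  have hMR : M / R ≤ ε / 3 := by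
    rw [div_le_iff₀ hR]
    simp only [R]
    field_simp
    linarith
  have hclamp (ν' : Measure S) [IsProbabilityMeasure ν']
      (h : secondMoment ν' a ≤ ENNReal.ofReal B) :
      |∫ x, g x ∂ν' - ∫ x, max (-R) (min R (g x)) ∂ν'| ≤ ε / 3 := by
    refine (abs_integral_sub_integral_clamp_le hg.measurable hga
      (ne_top_of_le_ne_top ENNReal.ofReal_ne_top h) hR).trans (le_trans ?_ hMR)
    have := integral_dS_sq_le hB h
    gcongr
    simp only [M]
    gcongr
  have hR' : DContinuous fun x => max (-R) (min R (g x)) :=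
    hg.comp (φ := fun t => max (-R) (min R t)) (by fun_prop)
  have hbdd : ∃ C, ∀ x, |max (-R) (min R (g x))| ≤ C :=
    ⟨R, fun x => abs_le.2 ⟨le_max_left _ _, max_le (by linarith) (min_le_left _ _)⟩⟩
  filter_upwards [Metric.tendsto_nhds.1 (hconv _ hR' hbdd) (ε / 3) (by positivity), hν, hνB]
    with l hl _ hlB
  rw [Real.dist_eq] at hl ⊢
  have h₁ := hclamp (ν l) hlB
  have h₂ := hclamp μ hμB
  have h₃ := abs_sub_le (∫ x, g x ∂ν l) (∫ x, max (-R) (min R (g x)) ∂ν l) (∫ x, g x ∂μ)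
  have h₄ := abs_sub_le (∫ x, max (-R) (min R (g x)) ∂ν l)
    (∫ x, max (-R) (min R (g x)) ∂μ) (∫ x, g x ∂μ)
  rw [abs_sub_comm] at h₂
  linarith

section WeakLimit

variable {ν : ℕ → Measure S} {μ : Measure S} [IsProbabilityMeasure μ]

lemma secondMoment_le_of_weakConvS (hν : ∀ᶠ l in atTop, IsProbabilityMeasure (ν l))
    (hconv : WeakConvS ν μ) {a : S} {B : ℝ} (hB : 0 ≤ B)
    (hνB : ∀ᶠ l in atTop, secondMoment (ν l) a ≤ ENNReal.ofReal B) :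
    secondMoment μ a ≤ ENNReal.ofReal B := by
  have htrunc (n : ℕ) : ∫⁻ x, ENNReal.ofReal (min (dS x a ^ 2) n) ∂μ ≤ ENNReal.ofReal B := by
    have hint (ν' : Measure S) [IsFiniteMeasure ν'] :
        Integrable (fun x => min (dS x a ^ 2) n) ν' :=
      Integrable.of_bound ((measurable_dS_sq a).min measurable_const).aestronglyMeasurable n
        (ae_of_all _ fun x => by
          rw [Real.norm_eq_abs, abs_of_nonneg (by positivity)]; exact min_le_right _ _)
    have hlim : ∫ x, min (dS x a ^ 2) n ∂μ ≤ B := by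
      refine le_of_tendsto ((hconv _ ((dContinuous_dS a).comp (φ := fun t => min (t ^ 2) n)
        (by fun_prop)) ⟨n, fun x => ?_⟩)) ?_
      · rw [abs_of_nonneg (by positivity)]; exact min_le_right _ _
      filter_upwards [hν, hνB] with l _ hl
      exact (integral_mono (hint _) (integrable_dS_sq (ne_top_of_le_ne_top (by simp) hl))
        fun x => min_le_left _ _).trans (integral_dS_sq_le hB hl)
    rw [← ofReal_integral_eq_lintegral_ofReal (hint μ) (ae_of_all _ fun x => by positivity)]
    exact ENNReal.ofReal_le_ofReal hlim
  have hsup (x : S) :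
      ENNReal.ofReal (dS x a ^ 2) = ⨆ n : ℕ, ENNReal.ofReal (min (dS x a ^ 2) n) := by
    refine le_antisymm (le_iSup_of_le ⌈dS x a ^ 2⌉₊ ?_)
      (iSup_le fun n => ENNReal.ofReal_le_ofReal (min_le_left _ _))
    rw [min_eq_left (Nat.le_ceil _)]
  rw [secondMoment, lintegral_congr hsup, lintegral_iSup
    (fun n => ((measurable_dS_sq a).min measurable_const).ennreal_ofReal)
    (fun m n hmn x => ENNReal.ofReal_le_ofReal (min_le_min le_rfl (Nat.cast_le.2 hmn)))]
  exact iSup_le htrunc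

lemma tendsto_integral_dS_sq_sub (hν : ∀ᶠ l in atTop, IsProbabilityMeasure (ν l))
    (hconv : WeakConvS ν μ) {a : S} {B : ℝ} (hB : 0 ≤ B)
    (hνB : ∀ᶠ l in atTop, secondMoment (ν l) a ≤ ENNReal.ofReal B)
    (hμB : secondMoment μ a ≤ ENNReal.ofReal B) (z : S) :
    Tendsto (fun l => ∫ x, dS x z ^ 2 ∂ν l - ∫ x, dS x a ^ 2 ∂ν l) atTop
      (𝓝 (∫ x, dS x z ^ 2 ∂μ - ∫ x, dS x a ^ 2 ∂μ)) := by
  have hsub (ν' : Measure S) [IsProbabilityMeasure ν'] (h : secondMoment ν' a ≤ ENNReal.ofReal B) :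
      ∫ x, dS x z ^ 2 - dS x a ^ 2 ∂ν' = ∫ x, dS x z ^ 2 ∂ν' - ∫ x, dS x a ^ 2 ∂ν' :=
    have ha := ne_top_of_le_ne_top ENNReal.ofReal_ne_top h
    integral_sub (integrable_dS_sq (secondMoment_ne_top ha z)) (integrable_dS_sq ha)
  set D := dS a z
  have hgrowth (x : S) :
      (dS x z ^ 2 - dS x a ^ 2) ^ 2 ≤ (8 * D ^ 2 + 2 * D ^ 4) * (1 + dS x a ^ 2) := by
    have h := abs_dS_sq_sub_dS_sq_le x a z
    have h₁ : (dS x z ^ 2 - dS x a ^ 2) ^ 2 ≤ (D * (2 * dS x a + D)) ^ 2 := by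
      rw [← sq_abs]; exact pow_le_pow_left₀ (abs_nonneg _) h 2
    nlinarith [sq_nonneg (2 * dS x a - D), sq_nonneg D, sq_nonneg (D * dS x a)]
  rw [← hsub μ hμB]
  refine (tendsto_integral_of_sq_le hν hconv hB hνB hμB
    ((dContinuous_dS z).comp₂ (φ := fun s t => s ^ 2 - t ^ 2) (by fun_prop) (dContinuous_dS a))
    hgrowth).congr' ?_
  filter_upwards [hν, hνB] with l _ hl using hsub (ν l) hl

lemma secondMoment_le_secondMoment_of_weakConvS
    (hν : ∀ᶠ l in atTop, IsProbabilityMeasure (ν l)) (hconv : WeakConvS ν μ) {a : ℕ → S}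
    {a₀ : S} (ha : Tendsto (fun l => dS (a l) a₀) atTop (𝓝 0)) {C : ℝ≥0∞} (hC : C ≠ ∞)
    (hνC : ∀ᶠ l in atTop, secondMoment (ν l) (a l) ≤ C)
    (hmin : ∀ z, ∀ᶠ l in atTop, secondMoment (ν l) (a l) ≤ secondMoment (ν l) z) (z : S) :
    secondMoment μ a₀ ≤ secondMoment μ z := by
  set B := 2 * C.toReal + 2
  have hB : 0 ≤ B := by positivity
  have hνB : ∀ᶠ l in atTop, secondMoment (ν l) a₀ ≤ ENNReal.ofReal B := by
    filter_upwards [hν, hνC, ha.eventually (ge_mem_nhds zero_lt_one)] with l _ hl hal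
    calc secondMoment (ν l) a₀
        ≤ 2 * secondMoment (ν l) (a l) + ENNReal.ofReal (2 * dS (a l) a₀ ^ 2) :=
          secondMoment_le_two_mul_add _ _
      _ ≤ 2 * C + ENNReal.ofReal 2 := by
          gcongr
          nlinarith [dS_nonneg (a l) a₀]
      _ = ENNReal.ofReal B := by
          rw [← ENNReal.ofReal_toReal hC, ← ENNReal.ofReal_ofNat 2,
            ← ENNReal.ofReal_mul zero_le_two, ← ENNReal.ofReal_add (by positivity) zero_le_two]
  have hμB := secondMoment_le_of_weakConvS hν hconv hB hνB
  have hdrift : Tendsto (fun l => ∫ x, dS x (a l) ^ 2 ∂ν l - ∫ x, dS x a₀ ^ 2 ∂ν l) atTop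
      (𝓝 0) := by
    have hd : Tendsto (fun l => dS a₀ (a l)) atTop (𝓝 0) := by simpa only [dS_comm] using ha
    refine squeeze_zero_norm' ?_ (by simpa using hd.mul ((hd.const_add 1).add_const B))
    filter_upwards [hν, hνB] with l _ hl
    have := integral_dS_sq_le hB hl
    refine (abs_integral_dS_sq_sub_le (ne_top_of_le_ne_top ENNReal.ofReal_ne_top hl) _).trans ?_
    gcongr
    exact dS_nonneg _ _
  have hgap := (tendsto_integral_dS_sq_sub hν hconv hB hνB hμB z).sub hdrift
  rw [sub_zero] at hgap
  rw [secondMoment_le_secondMoment_iff (ne_top_of_le_ne_top ENNReal.ofReal_ne_top hμB),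
    ← sub_nonneg]
  refine ge_of_tendsto hgap ?_
  filter_upwards [hν, hνB, hmin z] with l _ hl hlz
  rw [secondMoment_le_secondMoment_iff (ne_top_of_le_ne_top ENNReal.ofReal_ne_top hl)] at hlz
  linarith

end WeakLimit

lemma IsMarkov.measurable {κ : S → Measure S} (hκ : IsMarkov κ) : Measurable κ :=
  Measure.measurable_of_measurable_coe _ hκ.2

lemma IsMarkov.isProbabilityMeasure_bind {κ : S → Measure S} (hκ : IsMarkov κ) (μ : Measure S)
    [IsProbabilityMeasure μ] : IsProbabilityMeasure (μ.bind κ) := by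
  constructor
  rw [Measure.bind_apply MeasurableSet.univ hκ.measurable.aemeasurable]
  simp [fun x => (hκ.1 x).measure_univ]

/-- The law at stage `j + i` of the chain started with law `μ` at stage `j`, restricted to the
event of no transmission at stages `j, …, j + i - 1`. -/
def unnormPred (κ : S → Measure S) (f : ℕ → S → ℝ≥0∞) : ℕ → ℕ → Measure S → Measure S
  | 0, _, μ => μ
  | i + 1, j, μ => unnormPred κ f i (j + 1) ((μ.withDensity (f j)).bind κ)

lemma unnormPred_succ (κ : S → Measure S) (f : ℕ → S → ℝ≥0∞) (i j : ℕ) (μ : Measure S) :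
    unnormPred κ f (i + 1) j μ = ((unnormPred κ f i j μ).withDensity (f (j + i))).bind κ := by
  induction i generalizing j μ with
  | zero => rfl
  | succ i ih => rw [unnormPred, ih, Nat.add_right_comm, Nat.add_assoc, unnormPred]

section CostDecomposition

variable {κ : S → Measure S} (c' : ℕ → ℝ) (xhat : ℕ → S) {f : ℕ → S → ℝ≥0∞}

lemma measurable_Vaux (hκ : Measurable κ) {m j : ℕ} (hf : ∀ i < m, Measurable (f (j + i))) :
    Measurable (Vaux κ c' xhat f m j) := by
  induction m generalizing j with
  | zero => exact measurable_const
  | succ m ih =>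
    have hfj : Measurable (f j) := hf 0 m.succ_pos
    have hV := ih (j := j + 1) fun i hi => by
      simpa [Nat.add_right_comm, Nat.add_assoc] using hf (i + 1) (by omega)
    exact (hfj.mul ((measurable_dS_sq _).ennreal_ofReal.add
      ((Measure.measurable_lintegral hV).comp hκ))).add ((measurable_const.sub hfj).mul_const _)

lemma lintegral_Vaux (hκ : Measurable κ) {m j : ℕ} (μ : Measure S)
    (hf : ∀ i < m, Measurable (f (j + i))) :
    ∫⁻ x, Vaux κ c' xhat f m j x ∂μ = ∑ i ∈ Finset.range m,
      (∫⁻ x, f (j + i) x * ENNReal.ofReal (dS x (xhat (j + i)) ^ 2) ∂(unnormPred κ f i j μ)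
        + ENNReal.ofReal (c' (j + i)) * ∫⁻ x, (1 - f (j + i) x) ∂(unnormPred κ f i j μ)) := by
  induction m generalizing j μ with
  | zero => simp [Vaux]
  | succ m ih =>
    have hfj : Measurable (f j) := hf 0 m.succ_pos
    have hshift : ∀ i < m, Measurable (f (j + 1 + i)) := fun i hi => by
      simpa [Nat.add_right_comm, Nat.add_assoc] using hf (i + 1) (by omega)
    have hV := measurable_Vaux c' xhat hκ hshift
    have hG : Measurable fun x => ∫⁻ y, Vaux κ c' xhat f m (j + 1) y ∂κ x :=
      (Measure.measurable_lintegral hV).comp hκ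
    have hpt (x : S) : Vaux κ c' xhat f (m + 1) j x
        = (f j x * ENNReal.ofReal (dS x (xhat j) ^ 2) + ENNReal.ofReal (c' j) * (1 - f j x))
          + f j x * ∫⁻ y, Vaux κ c' xhat f m (j + 1) y ∂κ x := by
      simp only [Vaux]; ring
    rw [lintegral_congr hpt,
      lintegral_add_right (g := fun x => f j x * ∫⁻ y, Vaux κ c' xhat f m (j + 1) y ∂κ x) _
        (hfj.mul hG),
      lintegral_add_left (f := fun x => f j x * ENNReal.ofReal (dS x (xhat j) ^ 2))
        (hfj.mul (measurable_dS_sq _).ennreal_ofReal),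
      lintegral_const_mul (f := fun x => 1 - f j x) _ (measurable_const.sub hfj),
      Finset.sum_range_succ']
    have htail : ∫⁻ y, Vaux κ c' xhat f m (j + 1) y ∂((μ.withDensity (f j)).bind κ)
        = ∑ i ∈ Finset.range m,
          (∫⁻ x, f (j + (i + 1)) x * ENNReal.ofReal (dS x (xhat (j + (i + 1))) ^ 2)
              ∂(unnormPred κ f (i + 1) j μ)
            + ENNReal.ofReal (c' (j + (i + 1)))
              * ∫⁻ x, (1 - f (j + (i + 1)) x) ∂(unnormPred κ f (i + 1) j μ)) := by
      rw [ih _ hshift]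
      refine Finset.sum_congr rfl fun i _ => ?_
      rw [show j + (i + 1) = j + 1 + i by omega]
      rfl
    rw [← htail, Measure.lintegral_bind hκ.aemeasurable hV.aemeasurable,
      lintegral_withDensity_eq_lintegral_mul μ hfj hG, add_zero, add_comm]
    rfl

end CostDecomposition

section Stages

variable {κ : S → Measure S} {c' : ℕ → ℝ} {f : ℕ → S → ℝ≥0∞} {k N n : ℕ}

def estCost (κ : S → Measure S) (f : ℕ → S → ℝ≥0∞) (k i : ℕ) (z : S) : ℝ≥0∞ :=
  ∫⁻ x, f (k + i) x * ENNReal.ofReal (dS x z ^ 2) ∂(unnormPred κ f i k (κ origin))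

def txCost (κ : S → Measure S) (c' : ℕ → ℝ) (f : ℕ → S → ℝ≥0∞) (k i : ℕ) : ℝ≥0∞ :=
  ENNReal.ofReal (c' (k + i)) * ∫⁻ x, (1 - f (k + i) x) ∂(unnormPred κ f i k (κ origin))

lemma cost_eq_sum (hκ : Measurable κ) (xhat : ℕ → S) (hf : IsPolicy k N f) :
    Cost κ c' k N xhat f
      = ∑ i ∈ Finset.range (N + 1 - k), (estCost κ f k i (xhat (k + i)) + txCost κ c' f k i) :=
  lintegral_Vaux c' xhat hκ (κ origin) fun i hi => (hf (k + i) (by omega) (by omega)).1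

lemma estCost_le_cost (hκ : Measurable κ) (xhat : ℕ → S) (hf : IsPolicy k N f)
    (hn : k + n ≤ N) : estCost κ f k n (xhat (k + n)) ≤ Cost κ c' k N xhat f := by
  rw [cost_eq_sum hκ xhat hf]
  exact le_self_add.trans (Finset.single_le_sum (f := fun i => estCost κ f k i (xhat (k + i))
    + txCost κ c' f k i) (fun _ _ => zero_le) (Finset.mem_range.2 (by omega)))

lemma inX_of_estCost_le (hκ : Measurable κ) {xhat : ℕ → S} (hf : IsPolicy k N f)
    (h : ∀ n, k + n ≤ N → ∀ z, estCost κ f k n (xhat (k + n)) ≤ estCost κ f k n z) :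
    inX κ c' k N f xhat := fun yhat => by
  rw [cost_eq_sum hκ xhat hf, cost_eq_sum hκ yhat hf]
  exact Finset.sum_le_sum fun i hi =>
    add_le_add_left (h i (by simp at hi; omega) _) _

lemma estCost_le_of_inX (hκ : Measurable κ) {xhat : ℕ → S} (hf : IsPolicy k N f)
    (hX : inX κ c' k N f xhat) (hfin : Cost κ c' k N xhat f ≠ ∞) (hn : k + n ≤ N) (z : S) :
    estCost κ f k n (xhat (k + n)) ≤ estCost κ f k n z := by
  have hmem : n ∈ Finset.range (N + 1 - k) := Finset.mem_range.2 (by omega)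
  have hrest : ∑ i ∈ (Finset.range (N + 1 - k)).erase n,
      (estCost κ f k i (Function.update xhat (k + n) z (k + i)) + txCost κ c' f k i)
      = ∑ i ∈ (Finset.range (N + 1 - k)).erase n,
      (estCost κ f k i (xhat (k + i)) + txCost κ c' f k i) :=
    Finset.sum_congr rfl fun i hi => by rw [Function.update_of_ne (by simp at hi; omega)]
  have h := hX (Function.update xhat (k + n) z)
  rw [cost_eq_sum hκ _ hf, cost_eq_sum hκ _ hf, ← Finset.add_sum_erase _ _ hmem,
    ← Finset.add_sum_erase _ _ hmem, Function.update_self, hrest] at h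
  rw [cost_eq_sum hκ _ hf, ← Finset.add_sum_erase _ _ hmem] at hfin
  obtain ⟨hfin₁, hfin₂⟩ := ENNReal.add_ne_top.1 hfin
  exact (ENNReal.add_le_add_iff_right (ENNReal.add_ne_top.1 hfin₁).2).1
    ((ENNReal.add_le_add_iff_right hfin₂).1 h)

end Stages

section Normalization

variable {κ : S → Measure S} {f : ℕ → S → ℝ≥0∞} {k N n : ℕ}

lemma smul_condMeas {j : ℕ} {μ : Measure S} (h0 : ∫⁻ x, f j x ∂μ ≠ 0)
    (htop : ∫⁻ x, f j x ∂μ ≠ ∞) : (∫⁻ x, f j x ∂μ) • condMeas f j μ = μ.withDensity (f j) := by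
  rw [condMeas, smul_smul, ENNReal.mul_inv_cancel h0 htop, one_smul]

lemma isProbabilityMeasure_condMeas {j : ℕ} {μ : Measure S} (h0 : ∫⁻ x, f j x ∂μ ≠ 0)
    (htop : ∫⁻ x, f j x ∂μ ≠ ∞) : IsProbabilityMeasure (condMeas f j μ) := by
  constructor
  rw [condMeas, Measure.smul_apply, withDensity_apply _ MeasurableSet.univ, smul_eq_mul,
    setLIntegral_univ, ENNReal.inv_mul_cancel h0 htop]

lemma mupred_add_one (κ : S → Measure S) (f : ℕ → S → ℝ≥0∞) (k n : ℕ) :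
    mupred κ f k (k + (n + 1)) = (condMeas f (k + n) (mupred κ f k (k + n))).bind κ := by
  simp only [mupred, Nat.add_sub_cancel_left, mupredAux]

lemma qq_le_one (hf : IsPolicy k N f) {j : ℕ} (hkj : k ≤ j) (hjN : j ≤ N)
    [IsProbabilityMeasure (mupred κ f k j)] : qq κ f k j ≤ 1 :=
  (lintegral_mono (hf j hkj hjN).2).trans (by simp)

lemma isProbabilityMeasure_mupred (hκ : IsMarkov κ) (hf : IsPolicy k N f)
    (hnd : NonDeg κ f k N) : ∀ {n}, k + n ≤ N → IsProbabilityMeasure (mupred κ f k (k + n))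
  | 0, _ => by simpa [mupred, mupredAux] using hκ.1 origin
  | n + 1, hn => by
    have := isProbabilityMeasure_mupred hκ hf hnd (n := n) (by omega)
    have := isProbabilityMeasure_condMeas (hnd (k + n) (by omega) (by omega)).ne'
      ((qq_le_one hf (by omega) (by omega)).trans_lt ENNReal.one_lt_top).ne
    rw [mupred_add_one]
    exact hκ.isProbabilityMeasure_bind _

lemma qq_ne_top (hκ : IsMarkov κ) (hf : IsPolicy k N f) (hnd : NonDeg κ f k N)
    (hn : k + n ≤ N) : qq κ f k (k + n) ≠ ∞ :=
  have := isProbabilityMeasure_mupred hκ hf hnd hn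
  ((qq_le_one hf (by omega) hn).trans_lt ENNReal.one_lt_top).ne

lemma isProbabilityMeasure_mucond (hκ : IsMarkov κ) (hf : IsPolicy k N f) (hnd : NonDeg κ f k N)
    (hn : k + n ≤ N) : IsProbabilityMeasure (mucond κ f k (k + n)) :=
  isProbabilityMeasure_condMeas (hnd (k + n) (by omega) hn).ne' (qq_ne_top hκ hf hnd hn)

lemma unnormPred_eq_smul_mupred (hκ : IsMarkov κ) (hf : IsPolicy k N f) (hnd : NonDeg κ f k N) :
    ∀ {n}, k + n ≤ N →
      unnormPred κ f n k (κ origin)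
        = (∏ m ∈ Finset.range n, qq κ f k (k + m)) • mupred κ f k (k + n)
  | 0, _ => by simp [unnormPred, mupred, mupredAux]
  | n + 1, hn => by
    rw [unnormPred_succ, unnormPred_eq_smul_mupred hκ hf hnd (by omega), withDensity_smul_measure,
      ← smul_condMeas (hnd (k + n) (by omega) (by omega)).ne' (qq_ne_top hκ hf hnd (by omega)),
      smul_smul, Measure.bind_smul, mupred_add_one, Finset.prod_range_succ]
    rfl

def stageWeight (κ : S → Measure S) (f : ℕ → S → ℝ≥0∞) (k n : ℕ) : ℝ≥0∞ :=
  ∏ m ∈ Finset.range (n + 1), qq κ f k (k + m)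

lemma stageWeight_ne_zero (hnd : NonDeg κ f k N) (hn : k + n ≤ N) : stageWeight κ f k n ≠ 0 :=
  Finset.prod_ne_zero_iff.2 fun m hm => (hnd (k + m) (by omega) (by simp at hm; omega)).ne'

lemma stageWeight_ne_top (hκ : IsMarkov κ) (hf : IsPolicy k N f) (hnd : NonDeg κ f k N)
    (hn : k + n ≤ N) : stageWeight κ f k n ≠ ∞ :=
  ENNReal.prod_ne_top fun m hm => qq_ne_top hκ hf hnd (by simp at hm; omega)

lemma estCost_eq (hκ : IsMarkov κ) (hf : IsPolicy k N f) (hnd : NonDeg κ f k N)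
    (hn : k + n ≤ N) (z : S) :
    estCost κ f k n z = stageWeight κ f k n * secondMoment (mucond κ f k (k + n)) z := by
  have hq : qq κ f k (k + n) * (∫⁻ x, f (k + n) x ∂mupred κ f k (k + n))⁻¹ = 1 :=
    ENNReal.mul_inv_cancel (hnd (k + n) (by omega) hn).ne' (qq_ne_top hκ hf hnd hn)
  rw [estCost, unnormPred_eq_smul_mupred hκ hf hnd hn, lintegral_smul_measure, smul_eq_mul,
    stageWeight, Finset.prod_range_succ, secondMoment, mucond, condMeas, lintegral_smul_measure,
    smul_eq_mul, mul_assoc, ← mul_assoc (qq κ f k (k + n)), hq, one_mul,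
    lintegral_withDensity_eq_lintegral_mul _ (hf (k + n) (by omega) hn).1
      (measurable_dS_sq z).ennreal_ofReal]
  rfl

end Normalization

section BestResponse

variable {κ : S → Measure S} {c' : ℕ → ℝ} {f : ℕ → S → ℝ≥0∞} {k N n : ℕ}

lemma cost_alwaysTransmit (hκ : IsMarkov κ) (hkN : k ≤ N) (xhat : ℕ → S) :
    Cost κ c' k N xhat (fun _ _ => 0) = ENNReal.ofReal (c' k) := by
  have hv (x : S) : VV κ c' N xhat (fun _ _ => 0) k x = ENNReal.ofReal (c' k) := by
    rw [VV, show N + 1 - k = N - k + 1 by omega]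
    simp [Vaux]
  have := hκ.1 origin
  simp [Cost, hv]

lemma cost_le_of_inP_of_inX (hκ : IsMarkov κ) (hkN : k ≤ N) {xhat xhat' : ℕ → S}
    (hP : inP κ c' k N xhat' f) (hX : inX κ c' k N f xhat) :
    Cost κ c' k N xhat f ≤ ENNReal.ofReal (c' k) :=
  calc Cost κ c' k N xhat f ≤ Cost κ c' k N xhat' f := hX xhat'
    _ ≤ Cost κ c' k N xhat' (fun _ _ => 0) :=
        hP.2 _ fun _ _ _ => ⟨measurable_const, fun _ => zero_le_one⟩
    _ = ENNReal.ofReal (c' k) := cost_alwaysTransmit hκ hkN xhat'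

lemma inX_of_secondMoment_le (hκ : IsMarkov κ) (hf : IsPolicy k N f) (hnd : NonDeg κ f k N)
    {xhat : ℕ → S} (h : ∀ n, k + n ≤ N → ∀ z,
      secondMoment (mucond κ f k (k + n)) (xhat (k + n)) ≤ secondMoment (mucond κ f k (k + n)) z) :
    inX κ c' k N f xhat :=
  inX_of_estCost_le hκ.measurable hf fun n hn z => by
    rw [estCost_eq hκ hf hnd hn, estCost_eq hκ hf hnd hn]
    gcongr
    exact h n hn z

lemma secondMoment_mucond_le_of_inX (hκ : IsMarkov κ) (hf : IsPolicy k N f)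
    (hnd : NonDeg κ f k N) {xhat : ℕ → S} (hX : inX κ c' k N f xhat)
    (hfin : Cost κ c' k N xhat f ≠ ∞) (hn : k + n ≤ N) (z : S) :
    secondMoment (mucond κ f k (k + n)) (xhat (k + n)) ≤ secondMoment (mucond κ f k (k + n)) z := by
  have h := estCost_le_of_inX hκ.measurable hf hX hfin hn z
  rwa [estCost_eq hκ hf hnd hn, estCost_eq hκ hf hnd hn,
    ENNReal.mul_le_mul_iff_right (stageWeight_ne_zero hnd hn)
      (stageWeight_ne_top hκ hf hnd hn)] at h

lemma secondMoment_mucond_le_cost_div (hκ : IsMarkov κ) (hf : IsPolicy k N f)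
    (hnd : NonDeg κ f k N) (hn : k + n ≤ N) (xhat : ℕ → S) {β : ℝ≥0∞} (hβ0 : β ≠ 0)
    (hβ : β ≤ stageWeight κ f k n) :
    secondMoment (mucond κ f k (k + n)) (xhat (k + n)) ≤ Cost κ c' k N xhat f / β := by
  rw [ENNReal.le_div_iff_mul_le (Or.inl hβ0)
    (Or.inl (ne_top_of_le_ne_top (stageWeight_ne_top hκ hf hnd hn) hβ)), mul_comm]
  calc β * secondMoment (mucond κ f k (k + n)) (xhat (k + n))
      ≤ stageWeight κ f k n * secondMoment (mucond κ f k (k + n)) (xhat (k + n)) := by gcongr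
    _ = estCost κ f k n (xhat (k + n)) := (estCost_eq hκ hf hnd hn _).symm
    _ ≤ Cost κ c' k N xhat f := estCost_le_cost hκ.measurable xhat hf hn

end BestResponse

section PolicyLimits

variable {κ : S → Measure S} {f : ℕ → S → ℝ≥0∞} {g : ℕ → ℕ → S → ℝ≥0∞} {k N : ℕ}

lemma eventually_nonDeg (hnd : NonDeg κ f k N)
    (hq : ∀ j, k ≤ j → j ≤ N → Tendsto (fun l => qq κ (g l) k j) atTop (𝓝 (qq κ f k j))) :
    ∀ᶠ l in atTop, NonDeg κ (g l) k N := by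
  have h : ∀ j ∈ Finset.Icc k N, ∀ᶠ l in atTop, 0 < qq κ (g l) k j := fun j hj =>
    have hj := Finset.mem_Icc.1 hj
    (hq j hj.1 hj.2).eventually_const_lt (hnd j hj.1 hj.2)
  filter_upwards [(Filter.eventually_all_finset _).2 h] with l hl j hkj hjN
    using hl j (Finset.mem_Icc.2 ⟨hkj, hjN⟩)

lemma tendsto_stageWeight (hκ : IsMarkov κ) (hf : IsPolicy k N f) (hnd : NonDeg κ f k N)
    (hq : ∀ j, k ≤ j → j ≤ N → Tendsto (fun l => qq κ (g l) k j) atTop (𝓝 (qq κ f k j))) :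
    ∀ {n}, k + n ≤ N → Tendsto (fun l => stageWeight κ (g l) k n) atTop (𝓝 (stageWeight κ f k n))
  | 0, hn => by simpa [stageWeight] using hq k le_rfl (by omega)
  | n + 1, hn => by
    simp only [stageWeight, Finset.prod_range_succ _ (n + 1)] at *
    exact ENNReal.Tendsto.mul (tendsto_stageWeight hκ hf hnd hq (by omega))
      (Or.inr (qq_ne_top hκ hf hnd hn)) (hq _ (by omega) hn)
      (Or.inr (stageWeight_ne_top hκ hf hnd (by omega)))

end PolicyLimits

/-- Here `fseq i` plays the role of `f^(i+1)` and `xhat i` that of `x̂^(i)`, so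
`fseq i ∈ 𝔓(xhat i)` and `xhat (i+1) ∈ 𝔛(fseq i)`. -/
theorem estimates_closedness_general (κ : S → Measure S) (hκ : IsMarkov κ)
    (k N : ℕ) (hkN : k ≤ N) (c' : ℕ → ℝ)
    (xhat : ℕ → ℕ → S) (fseq : ℕ → ℕ → S → ℝ≥0∞)
    (hPX : ∀ i, inP κ c' k N (xhat i) (fseq i) ∧ inX κ c' k N (fseq i) (xhat (i + 1)))
    (φ : ℕ → ℕ)
    (f : ℕ → S → ℝ≥0∞) (hfpol : IsPolicy k N f) (hnd : NonDeg κ f k N)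
    (hfconv : PolConv κ k N (fun l => fseq (φ l)) f)
    (xh : ℕ → S)
    (hxh : ∀ j, k ≤ j → j ≤ N →
      Tendsto (fun l => dS (xhat (φ l + 1) j) (xh j)) atTop (𝓝 0)) :
    inX κ c' k N f xh := by
  have hpol l : IsPolicy k N (fseq (φ l)) := (hPX (φ l)).1.1
  have hcost l : Cost κ c' k N (xhat (φ l + 1)) (fseq (φ l)) ≤ ENNReal.ofReal (c' k) :=
    cost_le_of_inP_of_inX hκ hkN (hPX (φ l)).1 (hPX (φ l)).2
  have hq j hkj hjN := (hfconv j hkj hjN).2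
  have hnd' := eventually_nonDeg hnd hq
  refine inX_of_secondMoment_le hκ hfpol hnd fun n hn z => ?_
  have := isProbabilityMeasure_mucond hκ hfpol hnd hn
  set β := stageWeight κ f k n / 2
  have hβ0 : β ≠ 0 := ENNReal.div_ne_zero.2 ⟨stageWeight_ne_zero hnd hn, ENNReal.ofNat_ne_top⟩
  have hβ : ∀ᶠ l in atTop, β ≤ stageWeight κ (fseq (φ l)) k n :=
    ((tendsto_stageWeight hκ hfpol hnd hq hn).eventually_const_lt (ENNReal.half_lt_self
      (stageWeight_ne_zero hnd hn) (stageWeight_ne_top hκ hfpol hnd hn))).mono fun _ => le_of_lt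
  refine secondMoment_le_secondMoment_of_weakConvS
    (hnd'.mono fun l hl => isProbabilityMeasure_mucond hκ (hpol l) hl hn)
    (hfconv _ le_self_add hn).1 (hxh _ le_self_add hn)
    (ENNReal.div_ne_top (ENNReal.ofReal_ne_top (r := c' k)) hβ0) ?_ (fun z' => ?_) z
  · filter_upwards [hnd', hβ] with l hl hlβ
    exact (secondMoment_mucond_le_cost_div hκ (hpol l) hl hn _ hβ0 hlβ).trans
      (ENNReal.div_le_div_right (hcost l) _)
  · filter_upwards [hnd'] with l hl
    exact secondMoment_mucond_le_of_inX hκ (hpol l) hl (hPX (φ l)).2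
      ((hcost l).trans_lt ENNReal.ofReal_lt_top).ne hn z'

/-- Closedness of the best-response map `𝔛` along convergent subsequences: if the
policies converge to a non-degenerate policy `f` and the estimates converge
componentwise, then the limit estimates are a best response to `f`. (Here `fseq i`
plays the role of `f^(i+1)` and `xhat i` that of `x̂^(i)`, so `fseq i ∈ 𝔓(xhat i)`
and `xhat (i+1) ∈ 𝔛(fseq i)`.) -/
theorem estimates_closedness (κ : S → Measure S) (hκ : IsMarkov κ)
    (hA : Assumption1 κ)
    (k N : ℕ) (hkN : k ≤ N) (c' : ℕ → ℝ) (hc' : ∀ j, k ≤ j → j ≤ N → 0 < c' j)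
    (xhat : ℕ → ℕ → S) (fseq : ℕ → ℕ → S → ℝ≥0∞)
    (hPX : ∀ i, inP κ c' k N (xhat i) (fseq i) ∧ inX κ c' k N (fseq i) (xhat (i + 1)))
    (φ : ℕ → ℕ) (hφ : StrictMono φ)
    (f : ℕ → S → ℝ≥0∞) (hfpol : IsPolicy k N f) (hnd : NonDeg κ f k N)
    (hfconv : PolConv κ k N (fun l => fseq (φ l)) f)
    (xh : ℕ → S)
    (hxh : ∀ j, k ≤ j → j ≤ N →
      Tendsto (fun l => dS (xhat (φ l + 1) j) (xh j)) atTop (𝓝 0))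
    (xh' : ℕ → S)
    (hxh' : ∀ j, k ≤ j → j ≤ N →
      Tendsto (fun l => dS (xhat (φ l) j) (xh' j)) atTop (𝓝 0)) :
    inX κ c' k N f xh :=
  estimates_closedness_general κ hκ k N hkN c' xhat fseq hPX φ f hfpol hnd hfconv xh hxh

end
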